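/- arXiv:2604.10282 — 6 statements merged into one kernel-verified Lean document; each statement's English description precedes it below -/
import Mathlib

section
/- Let G be a Polish group and let H be a subgroup of G which is meagre as a subset of G. Then the index of H in G is 2^ℵ₀, i.e. the set G/H of left cosets of H has cardinality equal to the continuum. -/
/-!
Write the meagre subgroup `H` as a subset of an increasing union of closed meagre sets `F n`.
For finitely many indices `ι`, the tuples `q : ι → G` with `(q i)⁻¹ * q j ∉ F n` for all `i ≠ j`
form an open comeagre subset of `ι → G`, because `q ↦ (q i)⁻¹ * q j` is a continuous open map.
This lets one build a binary Cantor scheme of open sets with vanishing diameters in which any two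
points `u`, `v` of distinct sets at level `n + 1` satisfy `u⁻¹ * v ∉ F n`. In a complete metric
group every branch converges, and distinct branches give points in distinct left cosets of `H`,
so `G ⧸ H` has at least `2 ^ ℵ₀` elements; a Polish space has at most that many.
-/

open Set Metric Filter Topology Cardinal Function

theorem PolishSpace.mk_le_continuum (X : Type*) [TopologicalSpace X] [PolishSpace X] :
    #X ≤ 𝔠 := by
  rcases isEmpty_or_nonempty X with _ | _
  · simp
  obtain ⟨f, -, hf⟩ := PolishSpace.exists_nat_nat_continuous_surjective X
  simpa using lift_mk_le_lift_mk_of_surjective hf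

theorem IsMeagre.exists_monotone_isClosed_cover {X : Type*} [TopologicalSpace X] {s : Set X}
    (hs : IsMeagre s) :
    ∃ F : ℕ → Set X, Monotone F ∧ (∀ n, IsClosed (F n) ∧ IsMeagre (F n)) ∧ s ⊆ ⋃ n, F n := by
  obtain ⟨S, hSnd, hSc, hsS⟩ := isMeagre_iff_countable_union_isNowhereDense.1 hs
  obtain ⟨f, hf⟩ := (hSc.insert ∅).exists_eq_range (insert_nonempty _ _)
  have hfnd : ∀ n, IsNowhereDense (f n) := by
    intro n
    rcases (hf ▸ mem_range_self n : f n ∈ insert ∅ S) with h | h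
    · exact h ▸ isNowhereDense_empty
    · exact hSnd _ h
  refine ⟨accumulate fun n => closure (f n), monotone_accumulate, fun n => ⟨?_, ?_⟩, ?_⟩
  · exact (finite_Iic n).isClosed_biUnion fun _ _ => isClosed_closure
  · exact isMeagre_biUnion (to_countable _) fun k _ => (hfnd k).closure.isMeagre
  · rw [iUnion_accumulate]
    refine hsS.trans (sUnion_subset fun t ht => ?_)
    obtain ⟨n, rfl⟩ : t ∈ range f := hf ▸ mem_insert_of_mem _ ht
    exact subset_closure.trans (subset_iUnion (fun n => closure (f n)) n)

theorem IsOpen.exists_isOpen_closure_subset_dist_le {X : Type*} [PseudoMetricSpace X]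
    {U : Set X} (hU : IsOpen U) (hne : U.Nonempty) {η : ℝ} (hη : 0 < η) :
    ∃ V, IsOpen V ∧ V.Nonempty ∧ closure V ⊆ U ∧ ∀ x ∈ V, ∀ y ∈ V, dist x y ≤ η := by
  obtain ⟨p, hp⟩ := hne
  obtain ⟨r, hr, hrU⟩ := Metric.isOpen_iff.1 hU p hp
  have hρ : 0 < min r η / 2 := by positivity
  refine ⟨ball p (min r η / 2), isOpen_ball, nonempty_ball.2 hρ, ?_, fun x hx y hy => ?_⟩
  · refine closure_ball_subset_closedBall.trans ((closedBall_subset_ball ?_).trans hrU)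
    linarith [min_le_left r η]
  · have := dist_triangle_right x y p
    linarith [mem_ball.1 hx, mem_ball.1 hy, min_le_right r η]

section TopologicalGroup

variable {G ι : Type*} [Group G] [TopologicalSpace G] [IsTopologicalGroup G]

theorem isOpenMap_pi_inv_mul_apply {i j : ι} (hij : i ≠ j) :
    IsOpenMap fun q : ι → G => (q i)⁻¹ * q j := by
  classical
  refine IsOpenMap.of_sections fun q =>
    ⟨fun g => update q j (q i * g), by fun_prop, ?_, fun g => ?_⟩
  · simp
  · simp [update_of_ne hij]

theorem exists_isOpen_subset_pairwise_inv_mul_notMem [Finite ι] [BaireSpace (ι → G)]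
    {F : Set G} (hFc : IsClosed F) (hFm : IsMeagre F) {U : ι → Set G}
    (hUo : ∀ i, IsOpen (U i)) (hUne : ∀ i, (U i).Nonempty) :
    ∃ V : ι → Set G, (∀ i, IsOpen (V i) ∧ (V i).Nonempty ∧ V i ⊆ U i) ∧
      Pairwise fun i j => ∀ u ∈ V i, ∀ v ∈ V j, u⁻¹ * v ∉ F := by
  classical
  set S : Set (ι → G) :=
    ⋂ p : {p : ι × ι // p.1 ≠ p.2}, (fun q : ι → G => (q p.1.1)⁻¹ * q p.1.2) ⁻¹' Fᶜ
  have hSo : IsOpen S := isOpen_iInter_of_finite fun p => hFc.isOpen_compl.preimage (by fun_prop)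
  have hSr : S ∈ residual (ι → G) := countable_iInter_mem.2 fun p =>
    hFm.preimage_of_isOpenMap (by fun_prop) (isOpenMap_pi_inv_mul_apply p.2)
  -- `S` is open and comeagre, so it meets the box `univ.pi U` and contains a box around each point.
  obtain ⟨p, hpU, hpS⟩ := (dense_of_mem_residual hSr).inter_open_nonempty _
    (isOpen_set_pi finite_univ fun i _ => hUo i) (univ_pi_nonempty_iff.2 hUne)
  obtain ⟨V, hV, hVS⟩ := isOpen_pi_iff'.1 hSo p hpS
  refine ⟨fun i => V i ∩ U i, fun i => ⟨(hV i).1.inter (hUo i), ⟨p i, (hV i).2, hpU i trivial⟩,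
    inter_subset_right⟩, fun i j hij u hu v hv => ?_⟩
  have hpV : p ∈ univ.pi V := fun k _ => (hV k).2
  have huv : update (update p i u) j v ∈ univ.pi V :=
    (update_mem_pi_iff_of_mem ((update_mem_pi_iff_of_mem hpV).2 fun _ => hu.1)).2 fun _ => hv.1
  simpa [update_of_ne hij] using mem_iInter.1 (hVS huv) ⟨(i, j), hij⟩

end TopologicalGroup

theorem Fin.snoc_fun_val {α : Type*} (x : ℕ → α) (n : ℕ) :
    Fin.snoc (α := fun _ => α) (fun k : Fin n => x k) (x n) = fun k : Fin (n + 1) => x k :=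
  Fin.snoc_init_self (fun k : Fin (n + 1) => x k)

section MetricGroup

variable {G : Type*} [Group G] [MetricSpace G]

theorem exists_separated_refinement [IsTopologicalGroup G] [CompleteSpace G] {F : Set G}
    (hFc : IsClosed F) (hFm : IsMeagre F) {n : ℕ} {U : (Fin n → Bool) → Set G}
    (hUo : ∀ s, IsOpen (U s)) (hUne : ∀ s, (U s).Nonempty) :
    ∃ V : (Fin (n + 1) → Bool) → Set G,
      (∀ t, IsOpen (V t) ∧ (V t).Nonempty ∧ ∀ x ∈ V t, ∀ y ∈ V t, dist x y ≤ (1 / 2) ^ (n + 1)) ∧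
      (∀ s b, closure (V (Fin.snoc s b)) ⊆ U s) ∧
      Pairwise fun t t' => ∀ u ∈ V t, ∀ v ∈ V t', u⁻¹ * v ∉ F := by
  obtain ⟨W, hW, hWsep⟩ := exists_isOpen_subset_pairwise_inv_mul_notMem hFc hFm
    (U := fun t : Fin (n + 1) → Bool => U (Fin.init t)) (fun t => hUo _) (fun t => hUne _)
  choose V hVo hVne hVW hVdist using fun t =>
    (hW t).1.exists_isOpen_closure_subset_dist_le (hW t).2.1 (η := (1 / 2) ^ (n + 1))
      (by positivity)
  refine ⟨V, fun t => ⟨hVo t, hVne t, hVdist t⟩, fun s b => ?_, fun t t' h u hu v hv =>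
    hWsep h u (subset_closure.trans (hVW t) hu) v (subset_closure.trans (hVW t') hv)⟩
  simpa using (hVW (Fin.snoc s b)).trans (hW _).2.2

variable (G) in
structure SeparatedCantorScheme (F : ℕ → Set G) where
  set : ∀ n, (Fin n → Bool) → Set G
  isOpen : ∀ n s, IsOpen (set n s)
  nonempty : ∀ n s, (set n s).Nonempty
  dist_le : ∀ n s, ∀ x ∈ set n s, ∀ y ∈ set n s, dist x y ≤ (1 / 2) ^ n
  closure_subset : ∀ n s b, closure (set (n + 1) (Fin.snoc s b)) ⊆ set n s
  inv_mul_notMem : ∀ n, Pairwise fun s t : Fin (n + 1) → Bool =>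
    ∀ u ∈ set (n + 1) s, ∀ v ∈ set (n + 1) t, u⁻¹ * v ∉ F n

namespace SeparatedCantorScheme

variable {F : ℕ → Set G}

theorem nonempty_of_isClosed_isMeagre [IsTopologicalGroup G] [CompleteSpace G]
    (hFc : ∀ n, IsClosed (F n)) (hFm : ∀ n, IsMeagre (F n)) :
    Nonempty (SeparatedCantorScheme G F) := by
  let Level (n : ℕ) := {U : (Fin n → Bool) → Set G // ∀ s, IsOpen (U s) ∧ (U s).Nonempty ∧
    ∀ x ∈ U s, ∀ y ∈ U s, dist x y ≤ (1 / 2) ^ n}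
  choose V hV hVsub hVsep using fun n (U : Level n) =>
    exists_separated_refinement (hFc n) (hFm n) (fun s => (U.2 s).1) (fun s => (U.2 s).2.1)
  have hball : ∀ x ∈ ball (1 : G) (1 / 2), ∀ y ∈ ball (1 : G) (1 / 2), dist x y ≤ (1 / 2) ^ 0 :=
    fun x hx y hy => by
      have := dist_triangle_right x y 1
      linarith [mem_ball.1 hx, mem_ball.1 hy, pow_zero (1 / 2 : ℝ)]
  let U : ∀ n, Level n := fun n => Nat.rec
    ⟨fun _ => ball 1 (1 / 2), fun _ => ⟨isOpen_ball, nonempty_ball.2 (by norm_num), hball⟩⟩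
    (fun n U => ⟨V n U, hV n U⟩) n
  exact ⟨{ set := fun n => (U n).1
           isOpen := fun n s => ((U n).2 s).1
           nonempty := fun n s => ((U n).2 s).2.1
           dist_le := fun n s => ((U n).2 s).2.2
           closure_subset := fun n => hVsub n (U n)
           inv_mul_notMem := fun n => hVsep n (U n) }⟩

theorem antitone_set (A : SeparatedCantorScheme G F) (x : ℕ → Bool) :
    Antitone fun n => A.set n fun k => x k :=
  antitone_nat_of_succ_le fun n =>
    subset_closure.trans (Fin.snoc_fun_val x n ▸ A.closure_subset n _ _)

theorem exists_mem_set [CompleteSpace G] (A : SeparatedCantorScheme G F) (x : ℕ → Bool) :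
    ∃ z, ∀ n, z ∈ A.set n fun k => x k := by
  choose u hu using fun n => A.nonempty n fun k => x k
  have hmem : ∀ n m, n ≤ m → u m ∈ A.set n fun k => x k := fun n m h => A.antitone_set x h (hu m)
  have hcauchy : CauchySeq u := cauchySeq_of_le_tendsto_0 (fun N => (1 / 2 : ℝ) ^ N)
    (fun n m N hn hm => A.dist_le N _ _ (hmem N n hn) _ (hmem N m hm))
    (tendsto_pow_atTop_nhds_zero_of_lt_one (by norm_num) (by norm_num))
  obtain ⟨z, hz⟩ := cauchySeq_tendsto_of_complete hcauchy
  refine ⟨z, fun n => A.closure_subset n _ (x n) ?_⟩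
  rw [Fin.snoc_fun_val]
  exact mem_closure_of_tendsto hz (eventually_atTop.2 ⟨n + 1, fun m hm => hmem _ m hm⟩)

theorem exists_pairwise_inv_mul_notMem [CompleteSpace G] (A : SeparatedCantorScheme G F)
    (hF : Monotone F) :
    ∃ Φ : (ℕ → Bool) → G, Pairwise fun x y => (Φ x)⁻¹ * Φ y ∉ ⋃ n, F n := by
  choose Φ hΦ using A.exists_mem_set
  refine ⟨Φ, fun x y hxy hmem => ?_⟩
  obtain ⟨k, hk⟩ := ne_iff.1 hxy
  obtain ⟨m, hm⟩ := mem_iUnion.1 hmem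
  set n := max m k
  have hne : (fun j : Fin (n + 1) => x j) ≠ fun j : Fin (n + 1) => y j :=
    fun h => hk (congrFun h ⟨k, Nat.lt_succ_of_le (le_max_right m k)⟩)
  exact A.inv_mul_notMem n hne _ (hΦ x (n + 1)) _ (hΦ y (n + 1)) (hF (le_max_left m k) hm)

end SeparatedCantorScheme

theorem IsMeagre.exists_pairwise_inv_mul_notMem [IsTopologicalGroup G] [CompleteSpace G]
    {M : Set G} (hM : IsMeagre M) :
    ∃ Φ : (ℕ → Bool) → G, Pairwise fun x y => (Φ x)⁻¹ * Φ y ∉ M := by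
  obtain ⟨F, hFmono, hF, hMF⟩ := hM.exists_monotone_isClosed_cover
  obtain ⟨A⟩ := SeparatedCantorScheme.nonempty_of_isClosed_isMeagre (fun n => (hF n).1)
    fun n => (hF n).2
  obtain ⟨Φ, hΦ⟩ := A.exists_pairwise_inv_mul_notMem hFmono
  exact ⟨Φ, fun x y hxy hmem => hΦ hxy (hMF hmem)⟩

end MetricGroup

/-- A meagre subgroup of a Polish group has index the continuum. -/
theorem meagre_subgroup_index_continuum
    {G : Type*} [Group G] [TopologicalSpace G] [IsTopologicalGroup G] [PolishSpace G]
    (H : Subgroup G) (hH : IsMeagre (H : Set G)) :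
    Cardinal.mk (G ⧸ H) = Cardinal.continuum := by
  refine le_antisymm ((mk_le_of_surjective QuotientGroup.mk_surjective).trans
    (PolishSpace.mk_le_continuum G)) ?_
  let := TopologicalSpace.upgradeIsCompletelyMetrizable G
  obtain ⟨Φ, hΦ⟩ := hH.exists_pairwise_inv_mul_notMem
  have hinj : Injective fun x => (Φ x : G ⧸ H) :=
    fun x y hxy => by_contra fun hne => hΦ hne (QuotientGroup.eq.1 hxy)
  simpa using lift_mk_le_lift_mk_of_injective hinj
end

section
/- Let G be a Polish group, let X be a comeagre subset of G, let O be a nonempty open subset of G, and let H be a subgroup of G such that X ∩ O ⊆ H. Then H is an open subgroup of G. -/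
open Set Filter Topology Pointwise

section

variable {G : Type*} [Group G] [TopologicalSpace G] [IsTopologicalGroup G]

theorem preimage_mul_left_mem_residual {X : Set G} (hX : X ∈ residual G) (g : G) :
    (g * ·) ⁻¹' X ∈ residual G :=
  tendsto_residual_of_isOpenMap (continuous_const_mul g) (isOpenMap_mul_left g) hX

theorem IsOpen.div_self_mem_nhds_one {O : Set G} (hO : IsOpen O) (hne : O.Nonempty) :
    O / O ∈ 𝓝 1 := by
  obtain ⟨x, hx⟩ := hne
  exact hO.div_left.mem_nhds ⟨x, hx, x, hx, div_self' x⟩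

/-- Write `g = a / b` with `a, b ∈ O`. Then `O ∩ g O` is a nonempty open set, and `X ∩ g X` is
comeagre, hence dense; a common point `y` gives `g = y / (g⁻¹ y)` with `y, g⁻¹ y ∈ X ∩ O`. -/
theorem div_subset_div_inter_of_mem_residual [BaireSpace G] {X O : Set G}
    (hX : X ∈ residual G) (hO : IsOpen O) : O / O ⊆ (X ∩ O) / (X ∩ O) := by
  rintro _ ⟨a, ha, b, hb, rfl⟩
  set g := a / b
  have hdense : Dense (X ∩ (g⁻¹ * ·) ⁻¹' X) :=
    dense_of_mem_residual (inter_mem hX (preimage_mul_left_mem_residual hX g⁻¹))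
  have hmeet : (O ∩ (g⁻¹ * ·) ⁻¹' O).Nonempty := ⟨a, ha, by simpa [g] using hb⟩
  obtain ⟨y, ⟨hyX, hgyX⟩, hyO, hgyO⟩ :=
    hdense.exists_mem_open (hO.inter (hO.preimage (continuous_const_mul g⁻¹))) hmeet
  exact ⟨y, ⟨hyX, hyO⟩, g⁻¹ * y, ⟨hgyX, hgyO⟩, by simp [g]⟩

end

/-- A subgroup of a Polish group containing the intersection of a comeagre set with a
nonempty open set is open. -/
theorem isOpen_of_comeagre_inter_open_subset
    {G : Type*} [Group G] [TopologicalSpace G] [IsTopologicalGroup G] [PolishSpace G]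
    (X : Set G) (hX : X ∈ residual G)
    (O : Set G) (hO : IsOpen O) (hO' : O.Nonempty)
    (H : Subgroup G) (hH : X ∩ O ⊆ (H : Set G)) :
    IsOpen (H : Set G) := by
  refine Subgroup.isOpen_of_mem_nhds H (mem_of_superset (hO.div_self_mem_nhds_one hO') ?_)
  calc O / O ⊆ (X ∩ O) / (X ∩ O) := div_subset_div_inter_of_mem_residual hX hO
    _ ⊆ (H : Set G) / H := div_subset_div hH hH
    _ = H := coe_div_coe H
end

section
/- Let G be a Polish group, let H be a subgroup of G whose index is strictly less than 2^ℵ₀ (i.e. the set G/H of left cosets has cardinality strictly less than the continuum), and let Y be a comeagre subset of G. Then H ∩ Y is nonempty. -/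
open Set Filter Topology Metric CantorScheme PiNat
open scoped ENNReal

/-!
Suppose `H ∩ Y = ∅`. Since `(a, b) ↦ a⁻¹ * b` is a continuous open map, the relation
`{(a, b) | a⁻¹ * b ∈ Y}` is comeagre in `G × G`. A Cantor scheme of shrinking open sets,
where at depth `n` all `2 ^ n` sets are shrunk simultaneously so that distinct ones become
related by the `n`-th dense open set, yields points `f x`, `x : ℕ → Bool`, with
`(f x)⁻¹ * f y ∈ Y` whenever `x ≠ y`. These lie in pairwise distinct left cosets of `H`,
so `H` has index at least `2 ^ ℵ₀`.
-/

section Shrinking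

variable {X ι : Type*} [TopologicalSpace X] {R : Set (X × X)}

lemma exists_isOpen_prod_subset_of_dense (hRo : IsOpen R) (hRd : Dense R) {U V : Set X}
    (hUo : IsOpen U) (hUne : U.Nonempty) (hVo : IsOpen V) (hVne : V.Nonempty) :
    ∃ U' ⊆ U, ∃ V' ⊆ V, IsOpen U' ∧ U'.Nonempty ∧ IsOpen V' ∧ V'.Nonempty ∧ U' ×ˢ V' ⊆ R := by
  obtain ⟨⟨a, b⟩, ⟨ha, hb⟩, hab⟩ :=
    hRd.inter_open_nonempty _ (hUo.prod hVo) (hUne.prod hVne)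
  obtain ⟨u, v, hu, hv, hau, hbv, huv⟩ :=
    isOpen_prod_iff.1 ((hUo.prod hVo).inter hRo) a b ⟨⟨ha, hb⟩, hab⟩
  refine ⟨U ∩ u, inter_subset_left, V ∩ v, inter_subset_left, hUo.inter hu, ⟨a, ha, hau⟩,
    hVo.inter hv, ⟨b, hb, hbv⟩, ?_⟩
  exact (prod_mono inter_subset_right inter_subset_right).trans (huv.trans inter_subset_right)

lemma exists_shrink_prod_subset_of_dense (hRo : IsOpen R) (hRd : Dense R) {U : ι → Set X}
    (hU : ∀ i, IsOpen (U i) ∧ (U i).Nonempty) {i j : ι} (hij : i ≠ j) :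
    ∃ V : ι → Set X, (∀ k, IsOpen (V k) ∧ (V k).Nonempty ∧ V k ⊆ U k) ∧ V i ×ˢ V j ⊆ R := by
  classical
  obtain ⟨A, hAU, B, hBU, hAo, hAne, hBo, hBne, hAB⟩ :=
    exists_isOpen_prod_subset_of_dense hRo hRd (hU i).1 (hU i).2 (hU j).1 (hU j).2
  refine ⟨fun k => if k = i then A else if k = j then B else U k, fun k => ?_, ?_⟩
  · dsimp only
    split_ifs with hki hkj
    · exact hki ▸ ⟨hAo, hAne, hAU⟩
    · exact hkj ▸ ⟨hBo, hBne, hBU⟩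
    · exact ⟨(hU k).1, (hU k).2, subset_rfl⟩
  · simpa only [if_pos, if_neg hij.symm] using hAB

lemma exists_shrink_forall_prod_subset_of_dense (hRo : IsOpen R) (hRd : Dense R)
    {P : Set (ι × ι)} (hP : P.Finite) (hPne : ∀ p ∈ P, p.1 ≠ p.2) {U : ι → Set X}
    (hU : ∀ i, IsOpen (U i) ∧ (U i).Nonempty) :
    ∃ V : ι → Set X, (∀ k, IsOpen (V k) ∧ (V k).Nonempty ∧ V k ⊆ U k) ∧
      ∀ p ∈ P, V p.1 ×ˢ V p.2 ⊆ R := by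
  induction P, hP using Set.Finite.induction_on generalizing U with
  | empty => exact ⟨U, fun k => ⟨(hU k).1, (hU k).2, subset_rfl⟩, by simp⟩
  | @insert p P _ _ ih =>
    obtain ⟨V, hV, hVP⟩ := ih (fun q hq => hPne q (mem_insert_of_mem p hq)) hU
    obtain ⟨V', hV', hV'p⟩ := exists_shrink_prod_subset_of_dense hRo hRd
      (fun k => ⟨(hV k).1, (hV k).2.1⟩) (hPne p (mem_insert p P))
    refine ⟨V', fun k => ⟨(hV' k).1, (hV' k).2.1, (hV' k).2.2.trans (hV k).2.2⟩, ?_⟩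
    rintro q (rfl | hq)
    · exact hV'p
    · exact (prod_mono (hV' _).2.2 (hV' _).2.2).trans (hVP q hq)

end Shrinking

section CantorFamily

variable {X ι : Type*}

lemma exists_isOpen_closure_subset_ediam_le [PseudoEMetricSpace X] {U : Set X} (hU : IsOpen U)
    (hne : U.Nonempty) {ε : ℝ≥0∞} (hε : 0 < ε) :
    ∃ V, IsOpen V ∧ V.Nonempty ∧ closure V ⊆ U ∧ ediam V ≤ ε := by
  obtain ⟨x, hx⟩ := hne
  obtain ⟨r, hr, hrU⟩ := nhds_basis_closedEBall.mem_iff.1 (hU.mem_nhds hx)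
  set δ := min r (ε / 2)
  have hδ : 0 < δ := lt_min hr (ENNReal.half_pos hε.ne')
  refine ⟨eball x δ, isOpen_eball, ⟨x, mem_eball_self hδ⟩, ?_, ediam_eball_le.trans ?_⟩
  · refine (closure_minimal eball_subset_closedEBall isClosed_closedEBall).trans ?_
    exact (closedEBall_subset_closedEBall (min_le_left _ _)).trans hrU
  · calc 2 * δ ≤ 2 * (ε / 2) := by gcongr; exact min_le_right _ _
      _ = ε := ENNReal.mul_div_cancel two_ne_zero ENNReal.ofNat_ne_top

lemma exists_shrink_pairwise_prod_subset_of_dense [PseudoEMetricSpace X] {R : Set (X × X)}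
    (hRo : IsOpen R) (hRd : Dense R) {s : Set ι} (hs : s.Finite) {ε : ℝ≥0∞} (hε : 0 < ε)
    {U : ι → Set X} (hU : ∀ i, IsOpen (U i) ∧ (U i).Nonempty) :
    ∃ V : ι → Set X,
      (∀ i, IsOpen (V i) ∧ (V i).Nonempty ∧ closure (V i) ⊆ U i ∧ ediam (V i) ≤ ε) ∧
      ∀ i ∈ s, ∀ j ∈ s, i ≠ j → V i ×ˢ V j ⊆ R := by
  obtain ⟨W, hW, hWR⟩ := exists_shrink_forall_prod_subset_of_dense hRo hRd
    ((hs.prod hs).subset fun p (hp : p.1 ∈ s ∧ p.2 ∈ s ∧ p.1 ≠ p.2) => ⟨hp.1, hp.2.1⟩)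
    (fun p hp => hp.2.2) hU
  choose V hVo hVne hVW hVε using fun i =>
    exists_isOpen_closure_subset_ediam_le (hW i).1 (hW i).2.1 hε
  refine ⟨V, fun i => ⟨hVo i, hVne i, (hVW i).trans (hW i).2.2, hVε i⟩, ?_⟩
  intro i hi j hj hij
  exact (prod_mono (subset_closure.trans (hVW i)) (subset_closure.trans (hVW j))).trans
    (hWR (i, j) ⟨hi, hj, hij⟩)

variable [PseudoMetricSpace X] [Nonempty X]

lemma exists_cantorScheme_prod_subset {R : ℕ → Set (X × X)} (hRo : ∀ n, IsOpen (R n))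
    (hRd : ∀ n, Dense (R n)) :
    ∃ S : List Bool → Set X, ClosureAntitone S ∧ VanishingDiam S ∧ (∀ l, (S l).Nonempty) ∧
      ∀ l l', l.length = l'.length → l ≠ l' → S l ×ˢ S l' ⊆ R l.length := by
  let Level := {F : List Bool → Set X // ∀ l, IsOpen (F l) ∧ (F l).Nonempty}
  have step : ∀ (n : ℕ) (F : Level), ∃ F' : Level, (∀ l a, closure (F'.1 (a :: l)) ⊆ F.1 l) ∧
      (∀ l, ediam (F'.1 l) ≤ ((n + 1 : ℕ) : ℝ≥0∞)⁻¹) ∧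
      ∀ l l', l.length = n + 1 → l'.length = n + 1 → l ≠ l' → F'.1 l ×ˢ F'.1 l' ⊆ R (n + 1) := by
    intro n F
    obtain ⟨V, hV, hVR⟩ := exists_shrink_pairwise_prod_subset_of_dense (hRo (n + 1))
      (hRd (n + 1)) (List.finite_length_eq Bool (n + 1))
      (ENNReal.inv_pos.2 (ENNReal.natCast_ne_top _)) (U := fun l => F.1 l.tail) fun l => F.2 _
    exact ⟨⟨V, fun l => ⟨(hV l).1, (hV l).2.1⟩⟩, fun l a => (hV (a :: l)).2.2.1,
      fun l => (hV l).2.2.2, fun l l' hl hl' => hVR l hl l' hl'⟩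
  choose next hnext using step
  let F : ℕ → Level := fun n =>
    Nat.rec ⟨fun _ => univ, fun _ => ⟨isOpen_univ, univ_nonempty⟩⟩ next n
  let S : List Bool → Set X := fun l => (F l.length).1 l
  have hdiam : ∀ l, ediam (S l) ≤ (l.length : ℝ≥0∞)⁻¹ := by
    rintro (_ | ⟨a, l⟩)
    · simp -- the root bound is `(0 : ℝ≥0∞)⁻¹ = ⊤`
    · exact (hnext l.length _).2.1 _
  refine ⟨S, fun l a => (hnext l.length (F l.length)).1 l a, fun x => ?_,
    fun l => ((F _).2 l).2, ?_⟩
  · refine tendsto_of_tendsto_of_tendsto_of_le_of_le tendsto_const_nhds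
      ENNReal.tendsto_inv_nat_nhds_zero (fun _ => zero_le) fun n => ?_
    simpa only [res_length] using hdiam (res x n)
  · rintro (_ | ⟨a, l⟩) l' hll' hne
    · exact absurd (List.length_eq_zero_iff.1 hll'.symm).symm hne
    · have hS : S l' = (F (l.length + 1)).1 l' := by simp only [S, ← hll', List.length_cons]
      rw [hS]
      exact (hnext l.length _).2.2 _ _ rfl hll'.symm hne

variable [CompleteSpace X]

theorem exists_cantor_map_eventually_mem {R : ℕ → Set (X × X)} (hRo : ∀ n, IsOpen (R n))
    (hRd : ∀ n, Dense (R n)) :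
    ∃ f : (ℕ → Bool) → X, ∀ x y, x ≠ y → ∀ᶠ n in atTop, (f x, f y) ∈ R n := by
  obtain ⟨S, hanti, hvan, hne, hR⟩ := exists_cantorScheme_prod_subset hRo hRd
  have hdom := hanti.map_of_vanishingDiam hvan hne
  refine ⟨fun x => (inducedMap S).2 ⟨x, hdom ▸ mem_univ x⟩, fun x y hxy => ?_⟩
  obtain ⟨i, hi⟩ := Function.ne_iff.1 hxy
  filter_upwards [eventually_gt_atTop i] with n hn
  have hres : res x n ≠ res y n := fun h => hi (res_eq_res.1 h hn)
  simpa only [res_length] using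
    hR _ _ (by simp only [res_length]) hres ⟨map_mem _ n, map_mem _ n⟩

theorem exists_cantor_map_forall_ne_mem_of_mem_residual {R : Set (X × X)}
    (hR : R ∈ residual (X × X)) : ∃ f : (ℕ → Bool) → X, ∀ x y, x ≠ y → (f x, f y) ∈ R := by
  obtain ⟨T, hTR, hT, hTd⟩ := mem_residual.1 hR
  obtain ⟨W, hWo, rfl⟩ := hT.eq_iInter_nat
  have hWd : ∀ n, Dense (W n) := fun n => hTd.mono (iInter_subset W n)
  obtain ⟨f, hf⟩ := exists_cantor_map_eventually_mem (R := fun n => ⋂ k ≤ n, W k)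
    (fun n => (finite_le_nat n).isOpen_biInter fun k _ => hWo k) fun n =>
      dense_biInter_of_isOpen (fun k _ => hWo k) (to_countable _) fun k _ => hWd k
  refine ⟨f, fun x y hxy => hTR (mem_iInter.2 fun k => ?_)⟩
  obtain ⟨n, hn, hkn⟩ := ((hf x y hxy).and (eventually_ge_atTop k)).exists
  exact mem_iInter₂.1 hn k hkn

end CantorFamily

lemma mem_residual_preimage_inv_mul {G : Type*} [Group G] [TopologicalSpace G]
    [IsTopologicalGroup G] {Y : Set G} (hY : Y ∈ residual G) :
    {p : G × G | p.1⁻¹ * p.2 ∈ Y} ∈ residual (G × G) := by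
  have hopen : IsOpenMap fun p : G × G => p.1⁻¹ * p.2 :=
    isOpenMap_snd.comp (Homeomorph.shearMulRight G).symm.isOpenMap
  exact tendsto_residual_of_isOpenMap (by fun_prop) hopen hY

/-- In a Polish group, a subgroup of index strictly less than the continuum meets every
comeagre set. -/
theorem small_index_subgroup_meets_comeagre
    {G : Type*} [Group G] [TopologicalSpace G] [IsTopologicalGroup G] [PolishSpace G]
    (H : Subgroup G) (hH : Cardinal.mk (G ⧸ H) < Cardinal.continuum)
    (Y : Set G) (hY : Y ∈ residual G) :
    ((H : Set G) ∩ Y).Nonempty := by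
  let := TopologicalSpace.upgradeIsCompletelyMetrizable G
  obtain ⟨f, hf⟩ := exists_cantor_map_forall_ne_mem_of_mem_residual
    (mem_residual_preimage_inv_mul hY)
  by_contra hHY
  have hinj : Function.Injective fun x => (f x : G ⧸ H) := fun x y hxy =>
    by_contra fun hne => hHY ⟨_, QuotientGroup.eq.1 hxy, hf x y hne⟩
  exact hH.not_ge (by simpa using Cardinal.lift_mk_le_lift_mk_of_injective hinj)
end

section
/- Let G be a Polish group such that every normal subgroup N of G with N ≠ G is meagre as a subset of G. Then there is no surjective group homomorphism from G onto the infinite cyclic group ℤ. -/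
/-!
The kernel of a surjection `G →* ℤ` is a proper normal subgroup of countable index. A Baire
group is the union of countably many translates of such a subgroup, so the subgroup cannot be
meagre, contradicting the hypothesis.
-/

open scoped Pointwise

theorem IsMeagre.smul {G X : Type*} [Group G] [TopologicalSpace X] [MulAction G X]
    [ContinuousConstSMul G X] {s : Set X} (hs : IsMeagre s) (g : G) : IsMeagre (g • s) :=
  (Homeomorph.smul g).isInducing.isMeagre_image hs

theorem Subgroup.not_isMeagre_of_countable_quotient {G : Type*} [Group G] [TopologicalSpace G]
    [ContinuousConstSMul G G] [BaireSpace G] (H : Subgroup G) [Countable (G ⧸ H)] :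
    ¬ IsMeagre (H : Set G) := by
  intro hH
  have hcosets : IsMeagre (⋃ q : G ⧸ H, q.out • (H : Set G)) :=
    isMeagre_iUnion fun q => hH.smul q.out
  rw [← QuotientGroup.univ_eq_iUnion_smul] at hcosets
  exact not_isMeagre_of_isOpen isOpen_univ Set.univ_nonempty hcosets

theorem MonoidHom.ker_ne_top_of_surjective {G M : Type*} [Group G] [MulOneClass M] [Nontrivial M]
    {φ : G →* M} (hφ : Function.Surjective φ) : φ.ker ≠ ⊤ := by
  rw [Ne, MonoidHom.ker_eq_top_iff]
  rintro rfl
  obtain ⟨m, hm⟩ := exists_ne (1 : M)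
  obtain ⟨g, rfl⟩ := hφ m
  exact hm rfl

theorem MonoidHom.countable_quotient_ker_of_surjective {G H : Type*} [Group G] [Group H]
    [Countable H] {φ : G →* H} (hφ : Function.Surjective φ) : Countable (G ⧸ φ.ker) :=
  (QuotientGroup.quotientKerEquivOfSurjective φ hφ).injective.countable

/-- If every proper normal subgroup of a Polish group is meagre, then the group does not
surject onto the infinite cyclic group ℤ. -/
theorem no_surjection_onto_int_of_proper_normal_meagre
    {G : Type*} [Group G] [TopologicalSpace G] [IsTopologicalGroup G] [PolishSpace G]
    (h : ∀ N : Subgroup G, N.Normal → N ≠ ⊤ → IsMeagre (N : Set G)) :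
    ¬ ∃ φ : G →* Multiplicative ℤ, Function.Surjective φ := by
  rintro ⟨φ, hφ⟩
  have := MonoidHom.countable_quotient_ker_of_surjective hφ
  exact φ.ker.not_isMeagre_of_countable_quotient
    (h φ.ker φ.normal_ker (MonoidHom.ker_ne_top_of_surjective hφ))
end

section
/- Let G be a Polish group with uncountable cofinality, i.e. whenever (H_n), n ∈ ℕ, is an increasing sequence of subgroups of G with ⋃_n H_n = G, then H_n = G for some n. Then for every open subgroup H of G there exists a finite subset F of G such that the subgroup generated by H ∪ F is all of G. -/
/-!
An open subgroup `H` of a separable group has countably many cosets, since `G ⧸ H` is discrete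
and separable. Choosing representatives `gₙ` of the cosets, the subgroups
`⟨H ∪ {g₀, …, gₙ₋₁}⟩` form an increasing chain exhausting `G`, so by uncountable cofinality one
of them is already `G`.
-/

open TopologicalSpace

def Group.HasUncountableCofinality (G : Type*) [Group G] : Prop :=
  ∀ H : ℕ → Subgroup G, Monotone H → (∀ g : G, ∃ n, g ∈ H n) → ∃ n, H n = ⊤

theorem Subgroup.countable_quotient_of_isOpen {G : Type*} [Group G] [TopologicalSpace G]
    [SeparatelyContinuousMul G] [SeparableSpace G] {H : Subgroup G} (hH : IsOpen (H : Set G)) :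
    Countable (G ⧸ H) := by
  have := QuotientGroup.discreteTopology hH
  have : SeparableSpace (G ⧸ H) := (QuotientGroup.isQuotientMap_mk H).separableSpace
  exact separableSpace_iff_countable.mp this

theorem Subgroup.closure_union_range_out_eq_top {G : Type*} [Group G] (H : Subgroup G)
    {ι : Type*} {e : ι → G ⧸ H} (he : Function.Surjective e) :
    Subgroup.closure ((H : Set G) ∪ Set.range fun i => (e i).out) = ⊤ := by
  refine Subgroup.eq_top_iff' _ |>.mpr fun x => ?_
  obtain ⟨i, hi⟩ := he x
  have hx : (e i).out⁻¹ * x ∈ H := QuotientGroup.eq.mp <| by rw [QuotientGroup.out_eq', hi]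
  rw [← mul_inv_cancel_left (e i).out x]
  exact mul_mem (Subgroup.subset_closure (Or.inr ⟨i, rfl⟩)) (Subgroup.subset_closure (Or.inl hx))

theorem Group.HasUncountableCofinality.exists_closure_union_image_Iio_eq_top {G : Type*}
    [Group G] (hG : Group.HasUncountableCofinality G) (S : Set G) (g : ℕ → G)
    (hg : Subgroup.closure (S ∪ Set.range g) = ⊤) :
    ∃ n, Subgroup.closure (S ∪ g '' Set.Iio n) = ⊤ := by
  let K : ℕ → Subgroup G := fun n => Subgroup.closure (S ∪ g '' Set.Iio n)
  have hK : Monotone K := fun _ _ hmn => Subgroup.closure_mono <|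
    Set.union_subset_union_right _ <| Set.image_mono <| Set.Iio_subset_Iio hmn
  have hsup : ⨆ n, K n = ⊤ := by
    rw [← Subgroup.closure_iUnion, ← Set.union_iUnion, ← Set.image_iUnion, Set.iUnion_Iio,
      Set.image_univ, hg]
  refine hG K hK fun x => (Subgroup.mem_iSup_of_directed hK.directed_le).mp ?_
  exact hsup ▸ Subgroup.mem_top x

/-- A Polish group of uncountable cofinality is finitely generated over each of its open
subgroups. -/
theorem finitely_generated_over_open_subgroup_of_uncountable_cofinality
    {G : Type*} [Group G] [TopologicalSpace G] [IsTopologicalGroup G] [PolishSpace G]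
    (hcof : ∀ H : ℕ → Subgroup G, Monotone H → (∀ g : G, ∃ n, g ∈ H n) →
      ∃ n, H n = ⊤) :
    ∀ H : Subgroup G, IsOpen (H : Set G) →
      ∃ F : Finset G, Subgroup.closure ((H : Set G) ∪ (F : Set G)) = ⊤ := by
  intro H hH
  have := H.countable_quotient_of_isOpen hH
  obtain ⟨e, he⟩ := exists_surjective_nat (G ⧸ H)
  obtain ⟨n, hn⟩ := Group.HasUncountableCofinality.exists_closure_union_image_Iio_eq_top hcof _ _
    (H.closure_union_range_out_eq_top he)
  classical
  refine ⟨(Finset.range n).image fun i => (e i).out, ?_⟩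
  simpa [Set.Iio_def] using hn
end

section
/- Let G be a topological group whose underlying topological space is a Baire space, and suppose some conjugacy class C of G is comeagre in G. Then every normal subgroup N of G with N ≠ G is meagre in G; in fact, every such N is disjoint from C. -/
open Filter

/-- A comeagre subgroup meets its translate `a⁻¹ • H`, which forces `a ∈ H`. -/
theorem Subgroup.eq_top_of_mem_residual {G : Type*} [Group G] [TopologicalSpace G]
    [SeparatelyContinuousMul G] [BaireSpace G] (H : Subgroup G)
    (hH : (H : Set G) ∈ residual G) : H = ⊤ := by
  refine (eq_top_iff' H).2 fun a => ?_
  have htranslate : (a * ·) ⁻¹' (H : Set G) ∈ residual G :=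
    tendsto_residual_of_isOpenMap (continuous_const_mul a) (isOpenMap_mul_left a) hH
  obtain ⟨y, hy, hay⟩ := (dense_of_mem_residual (inter_mem hH htranslate)).nonempty
  simpa using H.mul_mem hay (H.inv_mem hy)

theorem Subgroup.Normal.disjoint_conjugatesOf_of_mem_residual {G : Type*} [Group G]
    [TopologicalSpace G] [SeparatelyContinuousMul G] [BaireSpace G] {N : Subgroup G}
    (hN : N.Normal) (hNtop : N ≠ ⊤) {g : G} (hcom : conjugatesOf g ∈ residual G) :
    Disjoint (N : Set G) (conjugatesOf g) := by
  refine Set.disjoint_right.2 fun x hgx hxN => hNtop (N.eq_top_of_mem_residual ?_)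
  have hgN : g ∈ N := Group.conjugates_subset_normal hxN hgx.symm
  exact mem_of_superset hcom (Group.conjugates_subset_normal hgN)

/-- If a Baire topological group has a comeagre conjugacy class, then every proper normal
subgroup is meagre, and in fact disjoint from that conjugacy class. -/
theorem proper_normal_meagre_of_comeagre_conjClass
    {G : Type*} [Group G] [TopologicalSpace G] [IsTopologicalGroup G] [BaireSpace G]
    (g : G) (C : Set G) (hC : C = {x : G | IsConj g x}) (hcom : C ∈ residual G) :
    ∀ N : Subgroup G, N.Normal → N ≠ ⊤ →
      IsMeagre (N : Set G) ∧ Disjoint (N : Set G) C := by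
  intro N hN hNtop
  subst hC
  have hdisj : Disjoint (N : Set G) (conjugatesOf g) :=
    hN.disjoint_conjugatesOf_of_mem_residual hNtop hcom
  have hcompl : IsMeagre (conjugatesOf g)ᶜ := by rwa [IsMeagre, compl_compl]
  exact ⟨hcompl.mono hdisj.subset_compl_right, hdisj⟩
end
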